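/- arXiv:1801.02304 — 2 statements merged into one kernel-verified Lean document; each statement's English description precedes it below -/
import Mathlib

section
/- If the polar complex Γ(C) of a code C ⊆ 2^[n] is shellable, then C has no sphere link obstructions: for every non-maximal face F of Γ(C), the link link_F Γ(C) is either collapsible or equal to the full polar complex Γ(2^{[n]\supp(F)}) on the remaining vertices. -/
def polarFace {n : ℕ} (σ : Finset (Fin n)) : Finset (Fin n ⊕ Fin n) :=
  σ.image Sum.inl ∪ σᶜ.image Sum.inr

def polar {n : ℕ} (C : Set (Finset (Fin n))) : Set (Finset (Fin n ⊕ Fin n)) :=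
  {F | ∃ σ ∈ C, F ⊆ polarFace σ}

def polarOn {n : ℕ} (V : Finset (Fin n)) (C : Set (Finset (Fin n))) :
    Set (Finset (Fin n ⊕ Fin n)) :=
  {F | ∃ σ ∈ C, F ⊆ σ.image Sum.inl ∪ (V \ σ).image Sum.inr}

def suppF {n : ℕ} (F : Finset (Fin n ⊕ Fin n)) : Finset (Fin n) :=
  F.image (Sum.elim id id)

section Collapse
variable {V : Type*} [DecidableEq V]

def link (Δ : Set (Finset V)) (T : Finset V) : Set (Finset V) :=
  {ν ∈ Δ | ν ∩ T = ∅ ∧ ν ∪ T ∈ Δ}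

def IsFacet (Δ : Set (Finset V)) (τ : Finset V) : Prop :=
  τ ∈ Δ ∧ ∀ s ∈ Δ, τ ⊆ s → s = τ

def FreePair (Δ : Set (Finset V)) (σ τ : Finset V) : Prop :=
  IsFacet Δ τ ∧ σ ⊂ τ ∧ ∀ τ', IsFacet Δ τ' → σ ⊆ τ' → τ' = τ

def CollapseStep (Δ Δ' : Set (Finset V)) : Prop :=
  ∃ σ τ, FreePair Δ σ τ ∧ Δ' = {ν ∈ Δ | ¬ σ ⊆ ν}

def Collapses (Δ Δ' : Set (Finset V)) : Prop :=
  Relation.ReflTransGen CollapseStep Δ Δ'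

def Collapsible (Δ : Set (Finset V)) : Prop :=
  Collapses Δ (∅ : Set (Finset V))

def IsShelling {t : ℕ} (k : ℕ) (F : Fin t → Finset V) : Prop :=
  (∀ i, (F i).card = k) ∧ Function.Injective F ∧
  ∀ i : Fin t, 0 < (i : ℕ) → ∀ ν ⊆ F i, (∃ j, j < i ∧ ν ⊆ F j) →
    ∃ μ, μ ⊆ F i ∧ (∃ j, j < i ∧ μ ⊆ F j) ∧ ν ⊆ μ ∧ μ.card = k - 1

def Shellable (k : ℕ) (Δ : Set (Finset V)) : Prop :=
  ∃ (t : ℕ) (F : Fin t → Finset V), IsShelling k F ∧ Δ = {ν | ∃ i, ν ⊆ F i}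

end Collapse

/-!
Restricting a shelling of `Γ(C)` to the facets containing `F` shells `link_F Γ(C)`, and each of
these facets minus `F` is a polar facet on the vertex set `[n] \ supp F`. Call a facet of a
shelling a homology facet if its restriction face is the whole facet. If the shelling of the link
has no homology facet, deleting the facets in reverse order is a sequence of elementary collapses.
If it has one, the link is the whole polar complex on `[n] \ supp F`: by induction on the vertex
set, the link of every vertex of the homology facet is whole, so every polar facet except possibly
the antipode of the homology facet occurs; and the antipode cannot be missing, because the sphere
minus one open facet has reduced Euler characteristic `0`, while a shelling computes it as `±` the
number of homology facets.
-/

open Finset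

section Polar
variable {α : Type*} [DecidableEq α]

def signedVertex (ρ : Finset α) (a : α) : α ⊕ α :=
  if a ∈ ρ then .inl a else .inr a

/-- `polarFacetOn V ρ` is the facet `σ ∪ \bar{V \ σ}`, `σ = V ∩ ρ`, of the polar complex on the
vertex set `V`; `Sum.inl a` is the vertex `a` and `Sum.inr a` its barred copy. -/
def polarFacetOn (V ρ : Finset α) : Finset (α ⊕ α) :=
  V.image (signedVertex ρ)

lemma elim_signedVertex (ρ : Finset α) (a : α) : Sum.elim id id (signedVertex ρ a) = a := by
  unfold signedVertex; split_ifs <;> rfl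

lemma signedVertex_injective (ρ : Finset α) : Function.Injective (signedVertex ρ) :=
  Function.LeftInverse.injective (g := Sum.elim id id) (elim_signedVertex ρ)

lemma signedVertex_congr {ρ ρ' : Finset α} {a : α} (h : a ∈ ρ ↔ a ∈ ρ') :
    signedVertex ρ a = signedVertex ρ' a := by
  simp only [signedVertex, h]

@[simp] lemma inl_mem_polarFacetOn {V ρ : Finset α} {a : α} :
    .inl a ∈ polarFacetOn V ρ ↔ a ∈ V ∧ a ∈ ρ := by
  simp only [polarFacetOn, signedVertex, mem_image]
  aesop

@[simp] lemma inr_mem_polarFacetOn {V ρ : Finset α} {a : α} :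
    .inr a ∈ polarFacetOn V ρ ↔ a ∈ V ∧ a ∉ ρ := by
  simp only [polarFacetOn, signedVertex, mem_image]
  aesop

lemma signedVertex_mem_polarFacetOn {V ρ ρ' : Finset α} {a : α} :
    signedVertex ρ' a ∈ polarFacetOn V ρ ↔ a ∈ V ∧ (a ∈ ρ' ↔ a ∈ ρ) := by
  unfold signedVertex; split_ifs <;> simp [*]

lemma card_polarFacetOn (V ρ : Finset α) : #(polarFacetOn V ρ) = #V :=
  card_image_of_injective V (signedVertex_injective ρ)

lemma polarFacetOn_congr {V ρ ρ' : Finset α} (h : ∀ a ∈ V, a ∈ ρ ↔ a ∈ ρ') :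
    polarFacetOn V ρ = polarFacetOn V ρ' :=
  image_congr fun a ha => signedVertex_congr (h a ha)

lemma polarFacetOn_mono {U V : Finset α} (h : U ⊆ V) (ρ : Finset α) :
    polarFacetOn U ρ ⊆ polarFacetOn V ρ :=
  image_subset_image h

lemma polarFacetOn_eq_union (V ρ : Finset α) :
    polarFacetOn V ρ = (V ∩ ρ).image .inl ∪ (V \ ρ).image .inr := by
  ext (a | a) <;> simp

lemma subset_polarFacetOn_iff {V ρ : Finset α} {ν : Finset (α ⊕ α)} :
    ν ⊆ polarFacetOn V ρ ↔ ∃ U ⊆ V, polarFacetOn U ρ = ν :=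
  subset_image_iff

lemma image_elim_polarFacetOn (U ρ : Finset α) :
    (polarFacetOn U ρ).image (Sum.elim id id) = U := by
  simp [polarFacetOn, image_image, Function.comp_def, elim_signedVertex]

lemma toLeft_polarFacetOn (U ρ : Finset α) : (polarFacetOn U ρ).toLeft = U ∩ ρ := by
  ext a; simp

lemma polarFacetOn_sdiff {U V : Finset α} (ρ : Finset α) :
    polarFacetOn V ρ \ polarFacetOn U ρ = polarFacetOn (V \ U) ρ :=
  (image_sdiff V U (signedVertex_injective ρ)).symm

lemma polarFacetOn_sdiff_signedVertex {V τ τ₀ : Finset α} {v : α} (h : v ∈ τ ↔ v ∈ τ₀) :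
    polarFacetOn V τ \ {signedVertex τ₀ v} = polarFacetOn (V.erase v) τ := by
  rw [sdiff_singleton_eq_erase, ← signedVertex_congr h, polarFacetOn, polarFacetOn,
    image_erase (signedVertex_injective τ)]

lemma insert_signedVertex_polarFacetOn {V ρ τ₀ : Finset α} {v : α} (hv : v ∈ V)
    (h : v ∈ ρ ↔ v ∈ τ₀) :
    insert (signedVertex τ₀ v) (polarFacetOn (V.erase v) ρ) = polarFacetOn V ρ := by
  rw [← signedVertex_congr h, polarFacetOn, ← image_insert, insert_erase hv, polarFacetOn]

lemma exists_polarFacetOn_ne_of_ssubset {V ρ : Finset α} {ν : Finset (α ⊕ α)}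
    (hν : ν ⊂ polarFacetOn V ρ) :
    ∃ ρ', polarFacetOn V ρ' ≠ polarFacetOn V ρ ∧ ν ⊆ polarFacetOn V ρ' := by
  obtain ⟨U, hUV, rfl⟩ := subset_polarFacetOn_iff.mp hν.subset
  obtain ⟨v, hvV, hvU⟩ := not_subset.mp fun hVU =>
    hν.ne (congrArg (polarFacetOn · ρ) (hUV.antisymm hVU))
  refine ⟨symmDiff ρ {v}, fun h => ?_, ?_⟩
  · have hv : signedVertex (symmDiff ρ {v}) v ∈ polarFacetOn V ρ :=
      h ▸ signedVertex_mem_polarFacetOn.mpr ⟨hvV, Iff.rfl⟩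
    simp [signedVertex_mem_polarFacetOn, mem_symmDiff] at hv
  · rw [polarFacetOn_congr fun a ha => ?_]
    · exact polarFacetOn_mono hUV _
    · have : a ≠ v := fun h => hvU (h ▸ ha)
      simp [mem_symmDiff, this]

def sphereFaces (V : Finset α) : Finset (Finset (α ⊕ α)) :=
  (V.powerset.sigma powerset).image fun p => polarFacetOn p.1 p.2

lemma mem_sphereFaces {V : Finset α} {ν : Finset (α ⊕ α)} :
    ν ∈ sphereFaces V ↔ ∃ ρ, ν ⊆ polarFacetOn V ρ := by
  simp only [sphereFaces, mem_image, mem_sigma, mem_powerset, Sigma.exists]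
  constructor
  · rintro ⟨U, ρ, ⟨hUV, -⟩, rfl⟩
    exact ⟨ρ, polarFacetOn_mono hUV ρ⟩
  · rintro ⟨ρ, hν⟩
    obtain ⟨U, hUV, rfl⟩ := subset_polarFacetOn_iff.mp hν
    exact ⟨U, U ∩ ρ, ⟨hUV, inter_subset_left⟩,
      polarFacetOn_congr fun a ha => by simp [ha]⟩

lemma sum_sphereFaces (V : Finset α) :
    ∑ ν ∈ sphereFaces V, (-1 : ℤ) ^ #ν = (-1) ^ #V := by
  rw [sphereFaces, sum_image, sum_sigma]
  · calc ∑ U ∈ V.powerset, ∑ ρ ∈ U.powerset, (-1 : ℤ) ^ #(polarFacetOn U ρ)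
        = ∑ U ∈ V.powerset, (-2 : ℤ) ^ #U * 1 ^ (#V - #U) := by
          refine sum_congr rfl fun U _ => ?_
          simp [card_polarFacetOn, card_powerset, ← mul_pow]
      _ = (-1) ^ #V := by rw [sum_pow_mul_eq_add_pow]; norm_num
  · rintro ⟨U, ρ⟩ hp ⟨U', ρ'⟩ hp' h
    simp only [coe_sigma, Set.mem_sigma_iff, mem_coe, mem_powerset] at hp hp' h
    have hU : U = U' := by
      rw [← image_elim_polarFacetOn U ρ, h, image_elim_polarFacetOn]
    subst hU
    have hρ := congrArg Finset.toLeft h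
    rw [toLeft_polarFacetOn, toLeft_polarFacetOn, inter_eq_right.mpr hp.2,
      inter_eq_right.mpr hp'.2] at hρ
    rw [hρ]

end Polar

lemma sum_Icc_neg_one_pow_card {α : Type*} [DecidableEq α] {r g : Finset α} (h : r ⊆ g) :
    ∑ ν ∈ Icc r g, (-1 : ℤ) ^ #ν = if r = g then (-1) ^ #g else 0 := by
  have hdisj : ∀ s ∈ (g \ r).powerset, Disjoint r s := fun s hs =>
    disjoint_of_subset_right (mem_powerset.mp hs) disjoint_sdiff
  rw [Icc_eq_image_powerset h, sum_image fun s hs s' hs' hss' => by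
    rw [← union_sdiff_cancel_left (hdisj s hs), hss', union_sdiff_cancel_left (hdisj s' hs')]]
  calc ∑ s ∈ (g \ r).powerset, (-1 : ℤ) ^ #(r ∪ s)
      = (-1) ^ #r * ∑ s ∈ (g \ r).powerset, (-1) ^ #s := by
        rw [mul_sum]
        exact sum_congr rfl fun s hs => by rw [card_union_of_disjoint (hdisj s hs), pow_add]
    _ = if r = g then (-1) ^ #g else 0 := by
        simp only [sum_powerset_neg_one_pow_card, sdiff_eq_empty_iff_subset]
        by_cases hrg : r = g
        · simp [hrg]
        · rw [if_neg fun hgr => hrg (h.antisymm hgr), if_neg hrg, mul_zero]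

section Shelling
variable {V : Type*} [DecidableEq V] {t k : ℕ} {G : Fin t → Finset V}

def restriction (G : Fin t → Finset V) (i : Fin t) : Finset V :=
  {v ∈ G i | ∃ j < i, (G i).erase v ⊆ G j}

lemma restriction_subset (G : Fin t → Finset V) (i : Fin t) : restriction G i ⊆ G i :=
  filter_subset _ _

def initialFaces (G : Fin t → Finset V) (m : ℕ) : Finset (Finset V) :=
  (univ.filter fun i : Fin t => (i : ℕ) < m).biUnion fun i => (G i).powerset

lemma mem_initialFaces {m : ℕ} {ν : Finset V} :
    ν ∈ initialFaces G m ↔ ∃ i : Fin t, (i : ℕ) < m ∧ ν ⊆ G i := by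
  simp [initialFaces]

lemma mem_initialFaces_fin {i : Fin t} {ν : Finset V} :
    ν ∈ initialFaces G i ↔ ∃ j < i, ν ⊆ G j :=
  mem_initialFaces

lemma coe_initialFaces_self : (initialFaces G t : Set (Finset V)) = {ν | ∃ i, ν ⊆ G i} := by
  ext ν; simp [mem_initialFaces]

lemma mem_initialFaces_of_subset {m : ℕ} {μ ν : Finset V} (h : μ ⊆ ν)
    (hν : ν ∈ initialFaces G m) : μ ∈ initialFaces G m := by
  obtain ⟨i, hi, hνi⟩ := mem_initialFaces.mp hν
  exact mem_initialFaces.mpr ⟨i, hi, h.trans hνi⟩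

namespace IsShelling

lemma exists_lt_subset_iff (hsh : IsShelling k G) (i : Fin t) {ν : Finset V} (hν : ν ⊆ G i) :
    (∃ j < i, ν ⊆ G j) ↔ ¬ restriction G i ⊆ ν := by
  obtain ⟨hcard, hinj, hshell⟩ := hsh
  constructor
  · rintro ⟨j, hji, hνj⟩
    obtain ⟨μ, hμi, ⟨l, hli, hμl⟩, hνμ, hμcard⟩ :=
      hshell i (Nat.zero_lt_of_lt hji) ν hν ⟨j, hji, hνj⟩
    have hμ : μ ⊂ G i := hμi.ssubset_of_ne fun h =>
      hli.ne (hinj (eq_of_subset_of_card_le (h ▸ hμl) (by rw [hcard, hcard]))).symm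
    obtain ⟨u, hu, huμ⟩ : ∃ u ∉ μ, insert u μ = G i := by
      refine exists_eq_insert_iff.mpr ⟨hμi, ?_⟩
      have := card_lt_card hμ
      rw [hcard] at this ⊢
      omega
    refine fun hR => hu (hνμ (hR ?_))
    refine mem_filter.mpr ⟨huμ ▸ mem_insert_self u μ, l, hli, ?_⟩
    rwa [← huμ, erase_insert hu]
  · intro hR
    obtain ⟨u, hu, huν⟩ := not_subset.mp hR
    obtain ⟨-, j, hji, hj⟩ := mem_filter.mp hu
    exact ⟨j, hji, (subset_erase.mpr ⟨hν, huν⟩).trans hj⟩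

lemma restriction_notMem_initialFaces (hsh : IsShelling k G) (i : Fin t) :
    restriction G i ∉ initialFaces G i := by
  rw [mem_initialFaces_fin, hsh.exists_lt_subset_iff i (restriction_subset G i), not_not]

lemma initialFaces_succ (hsh : IsShelling k G) (i : Fin t) :
    initialFaces G (i + 1) = initialFaces G i ∪ Icc (restriction G i) (G i) := by
  ext ν
  simp only [mem_union, mem_Icc, mem_initialFaces, Nat.lt_succ_iff_lt_or_eq, or_and_right,
    exists_or, Fin.val_eq_val, exists_eq_left, ← Fin.lt_def]
  refine ⟨fun h => ?_, Or.imp_right And.right⟩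
  rcases h with hold | hν
  · exact Or.inl hold
  · exact or_iff_not_imp_left.mpr fun hold =>
      ⟨not_not.mp (mt (hsh.exists_lt_subset_iff i hν).mpr hold), hν⟩

lemma disjoint_initialFaces_Icc (hsh : IsShelling k G) (i : Fin t) :
    Disjoint (initialFaces G i) (Icc (restriction G i) (G i)) :=
  disjoint_left.mpr fun _ hν hνI =>
    hsh.restriction_notMem_initialFaces i (mem_initialFaces_of_subset (mem_Icc.mp hνI).1 hν)


lemma sum_initialFaces (hsh : IsShelling k G) :
    ∑ ν ∈ initialFaces G t, (-1 : ℤ) ^ #ν =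
      ∑ i, if restriction G i = G i then (-1) ^ k else 0 := by
  suffices h : ∀ m ≤ t, ∑ ν ∈ initialFaces G m, (-1 : ℤ) ^ #ν =
      ∑ i ∈ univ.filter fun i : Fin t => (i : ℕ) < m,
        if restriction G i = G i then (-1) ^ k else 0 by
    simp [h t le_rfl]
  intro m hm
  induction m with
  | zero => simp [initialFaces]
  | succ m ih =>
    let i : Fin t := ⟨m, hm⟩
    have hfilter : (univ.filter fun j : Fin t => (j : ℕ) < m + 1) =
        insert i (univ.filter fun j : Fin t => (j : ℕ) < m) := by
      ext j; simp [Fin.ext_iff, i]; omega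
    rw [show initialFaces G (m + 1) = _ from hsh.initialFaces_succ i,
      sum_union (hsh.disjoint_initialFaces_Icc i), ih (Nat.le_of_succ_le hm),
      sum_Icc_neg_one_pow_card (restriction_subset G i), hfilter,
      sum_insert (by simp [i]), add_comm, hsh.1 i]

lemma isFacet_initialFaces (hsh : IsShelling k G) {m : ℕ} {i : Fin t} (hi : (i : ℕ) < m) :
    IsFacet ↑(initialFaces G m) (G i) := by
  refine ⟨mem_initialFaces.mpr ⟨i, hi, subset_rfl⟩, fun s hs his => ?_⟩
  obtain ⟨j, -, hsj⟩ := mem_initialFaces.mp hs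
  exact (eq_of_subset_of_card_le his ((card_le_card hsj).trans (by rw [hsh.1, hsh.1]))).symm

lemma collapseStep (hsh : IsShelling k G) (i : Fin t) (h : restriction G i ≠ G i) :
    CollapseStep (initialFaces G (i + 1) : Set (Finset V)) (initialFaces G i) := by
  refine ⟨restriction G i, G i, ⟨hsh.isFacet_initialFaces (Nat.lt_succ_self _),
    (restriction_subset G i).ssubset_of_ne h, ?_⟩, ?_⟩
  · rintro τ ⟨hτ, hτmax⟩ hRτ
    obtain ⟨j, hj, hτj⟩ := mem_initialFaces.mp hτ
    obtain rfl := hτmax (G j) (mem_initialFaces.mpr ⟨j, hj, subset_rfl⟩) hτj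
    rcases Nat.lt_succ_iff_lt_or_eq.mp hj with hj | hj
    · exact absurd (mem_initialFaces.mpr ⟨j, hj, hRτ⟩) (hsh.restriction_notMem_initialFaces i)
    · exact congrArg G (Fin.ext hj)
  · ext ν
    simp only [mem_coe, hsh.initialFaces_succ, mem_union]
    constructor
    · exact fun hν => ⟨Or.inl hν, fun hR =>
        hsh.restriction_notMem_initialFaces i (mem_initialFaces_of_subset hR hν)⟩
    · rintro ⟨hν | hν, hR⟩
      · exact hν
      · exact absurd (mem_Icc.mp hν).1 hR

theorem collapsible (hsh : IsShelling k G) (h : ∀ i, restriction G i ≠ G i) :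
    Collapsible {ν | ∃ i, ν ⊆ G i} := by
  rw [← coe_initialFaces_self]
  suffices ∀ m ≤ t, Collapses (initialFaces G m : Set (Finset V)) ∅ from this t le_rfl
  intro m hm
  induction m with
  | zero =>
    rw [show initialFaces G 0 = ∅ by simp [initialFaces], coe_empty]
    exact .refl
  | succ m ih =>
    exact .head (hsh.collapseStep ⟨m, hm⟩ (h _)) (ih (Nat.le_of_succ_le hm))

lemma comp_sdiff {t' : ℕ} {e : Fin t' ↪o Fin t} {F : Finset V} (hsh : IsShelling k G)
    (he : Set.range e = {l | F ⊆ G l}) : IsShelling (k - #F) fun i => G (e i) \ F := by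
  obtain ⟨hcard, hinj, hshell⟩ := hsh
  have hF : ∀ i, F ⊆ G (e i) := fun i => (he.subset ⟨i, rfl⟩ :)
  refine ⟨fun i => by rw [card_sdiff_of_subset (hF i), hcard],
    fun a b hab => e.injective (hinj ?_), ?_⟩
  · rw [← sdiff_union_of_subset (hF a), ← sdiff_union_of_subset (hF b)]
    exact congrArg (· ∪ F) hab
  · rintro i - ν hν ⟨j, hji, hνj⟩
    obtain ⟨μ, hμi, ⟨l, hli, hμl⟩, hνμ, hμcard⟩ :=
      hshell (e i) (Nat.zero_lt_of_lt (e.lt_iff_lt.mpr hji)) (ν ∪ F)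
        (union_subset (hν.trans sdiff_subset) (hF i))
        ⟨e j, e.lt_iff_lt.mpr hji, union_subset (hνj.trans sdiff_subset) (hF j)⟩
    have hFμ : F ⊆ μ := subset_union_right.trans hνμ
    obtain ⟨j', rfl⟩ : l ∈ Set.range e := he ▸ hFμ.trans hμl
    refine ⟨μ \ F, sdiff_subset_sdiff hμi le_rfl, ⟨j', e.lt_iff_lt.mp hli,
      sdiff_subset_sdiff hμl le_rfl⟩, subset_sdiff.mpr ⟨subset_union_left.trans hνμ,
      disjoint_of_subset_left hν sdiff_disjoint⟩, ?_⟩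
    rw [card_sdiff_of_subset hFμ, hμcard]
    omega

lemma exists_shelling_link (hsh : IsShelling k G) (F : Finset V) :
    ∃ (t' : ℕ) (e : Fin t' ↪o Fin t), Set.range e = {l | F ⊆ G l} ∧
      IsShelling (k - #F) fun i => G (e i) \ F := by
  let s : Finset (Fin t) := {l | F ⊆ G l}
  have he : Set.range (s.orderEmbOfFin rfl) = {l | F ⊆ G l} := by simp [s]
  exact ⟨#s, s.orderEmbOfFin rfl, he, hsh.comp_sdiff he⟩

end IsShelling

lemma restriction_comp_sdiff {t' : ℕ} {e : Fin t' ↪o Fin t} {F : Finset V}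
    (he : Set.range e = {l | F ⊆ G l}) {i : Fin t'} (h : restriction G (e i) = G (e i)) :
    restriction (fun i => G (e i) \ F) i = G (e i) \ F := by
  refine filter_true_of_mem fun v hv => ?_
  obtain ⟨hvG, hvF⟩ := mem_sdiff.mp hv
  obtain ⟨-, l, hli, hl⟩ := mem_filter.mp (h.symm ▸ hvG : v ∈ restriction G (e i))
  have hFl : F ⊆ G l := (subset_erase.mpr ⟨he.subset ⟨i, rfl⟩, fun h => hvF h⟩).trans hl
  obtain ⟨j, rfl⟩ : l ∈ Set.range e := he ▸ hFl
  exact ⟨j, e.lt_iff_lt.mp hli, by rw [← erase_sdiff_comm]; exact sdiff_subset_sdiff hl le_rfl⟩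

lemma link_eq_of_range {t' : ℕ} {e : Fin t' → Fin t} {F : Finset V}
    (he : Set.range e = {l | F ⊆ G l}) :
    link {ν | ∃ i, ν ⊆ G i} F = {ν | ∃ i, ν ⊆ G (e i) \ F} := by
  ext ν
  constructor
  · rintro ⟨-, hdisj, l, hl⟩
    obtain ⟨i, rfl⟩ : l ∈ Set.range e := he ▸ subset_union_right.trans hl
    exact ⟨i, subset_sdiff.mpr ⟨subset_union_left.trans hl, disjoint_iff_inter_eq_empty.mpr hdisj⟩⟩
  · rintro ⟨i, hνi⟩
    refine ⟨⟨e i, hνi.trans sdiff_subset⟩,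
      disjoint_iff_inter_eq_empty.mp (disjoint_of_subset_left hνi sdiff_disjoint),
      e i, union_subset (hνi.trans sdiff_subset) (he.subset ⟨i, rfl⟩)⟩

end Shelling

section PolarShelling
variable {α : Type*} [DecidableEq α] {t : ℕ} {V : Finset α} {G : Fin t → Finset (α ⊕ α)}

lemma IsShelling.exists_eq_polarFacetOn_of_forall_ne (hsh : IsShelling #V G)
    (hG : ∀ i, ∃ τ, G i = polarFacetOn V τ) {i₀ : Fin t} (h₀ : restriction G i₀ = G i₀)
    {ρ : Finset α}
    (hne : ∀ ρ', polarFacetOn V ρ' ≠ polarFacetOn V ρ → ∃ j, G j = polarFacetOn V ρ') :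
    ∃ j, G j = polarFacetOn V ρ := by
  by_contra! hρ
  have hfaces : initialFaces G t = (sphereFaces V).erase (polarFacetOn V ρ) := by
    ext ν
    rw [mem_initialFaces, mem_erase, mem_sphereFaces]
    constructor
    · rintro ⟨i, -, hνi⟩
      obtain ⟨τ, hτ⟩ := hG i
      refine ⟨fun h => hρ i ?_, τ, hτ ▸ hνi⟩
      exact (eq_of_subset_of_card_le (h ▸ hνi) (by rw [hsh.1, card_polarFacetOn])).symm
    · rintro ⟨hνρ, ρ', hν⟩
      obtain ⟨ρ'', hne', hν'⟩ :
          ∃ ρ'', polarFacetOn V ρ'' ≠ polarFacetOn V ρ ∧ ν ⊆ polarFacetOn V ρ'' := by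
        by_cases h : polarFacetOn V ρ' = polarFacetOn V ρ
        · exact exists_polarFacetOn_ne_of_ssubset ((h ▸ hν).ssubset_of_ne hνρ)
        · exact ⟨ρ', h, hν⟩
      obtain ⟨j, hj⟩ := hne ρ'' hne'
      exact ⟨j, j.isLt, hj ▸ hν'⟩
  have hsum := hsh.sum_initialFaces
  rw [hfaces, sum_erase_eq_sub (mem_sphereFaces.mpr ⟨ρ, subset_rfl⟩), sum_sphereFaces,
    card_polarFacetOn, sub_self, ← sum_filter, sum_const, nsmul_eq_mul] at hsum
  have hpos : 0 < #(univ.filter fun i => restriction G i = G i) := card_pos.mpr ⟨i₀, by simp [h₀]⟩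
  exact mul_ne_zero (by exact_mod_cast hpos.ne') (pow_ne_zero _ (by norm_num)) hsum.symm

theorem IsShelling.exists_eq_polarFacetOn (hsh : IsShelling #V G)
    (hG : ∀ i, ∃ τ, G i = polarFacetOn V τ) {i₀ : Fin t} (h₀ : restriction G i₀ = G i₀)
    (ρ : Finset α) : ∃ j, G j = polarFacetOn V ρ := by
  induction V using Finset.strongInduction generalizing t G i₀ ρ with
  | H V ih =>
  obtain ⟨τ₀, hτ₀⟩ := hG i₀
  have hnear : ∀ ρ, (∃ v ∈ V, (v ∈ ρ ↔ v ∈ τ₀)) → ∃ j, G j = polarFacetOn V ρ := by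
    rintro ρ ⟨v, hv, hvρ⟩
    obtain ⟨t', e, he, hshw⟩ := hsh.exists_shelling_link {signedVertex τ₀ v}
    have hw : ∀ i, signedVertex τ₀ v ∈ G (e i) := fun i =>
      singleton_subset_iff.mp (he.subset ⟨i, rfl⟩)
    have hGw : ∀ i, ∃ τ, G (e i) \ {signedVertex τ₀ v} = polarFacetOn (V.erase v) τ := by
      intro i
      obtain ⟨τ, hτ⟩ := hG (e i)
      have hvτ := hw i
      rw [hτ, signedVertex_mem_polarFacetOn] at hvτ
      exact ⟨τ, by rw [hτ, polarFacetOn_sdiff_signedVertex hvτ.2.symm]⟩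
    obtain ⟨i₀', rfl⟩ : i₀ ∈ Set.range e := he ▸ singleton_subset_iff.mpr
      (hτ₀ ▸ signedVertex_mem_polarFacetOn.mpr ⟨hv, Iff.rfl⟩)
    rw [card_singleton, ← card_erase_of_mem hv] at hshw
    obtain ⟨j, hj⟩ := ih (V.erase v) (erase_ssubset hv) hshw hGw (restriction_comp_sdiff he h₀) ρ
    refine ⟨e j, ?_⟩
    rw [← insert_erase (hw j), ← sdiff_singleton_eq_erase, hj,
      insert_signedVertex_polarFacetOn hv hvρ]
  by_cases h : ∃ v ∈ V, (v ∈ ρ ↔ v ∈ τ₀)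
  · exact hnear ρ h
  · refine hsh.exists_eq_polarFacetOn_of_forall_ne hG h₀ fun ρ' hρ' => hnear ρ' ?_
    by_contra h'
    exact hρ' (polarFacetOn_congr fun v hv => by
      have := not_exists.mp h v; have := not_exists.mp h' v; tauto)

end PolarShelling

section PolarComplex
variable {n : ℕ}

lemma polarFace_eq_polarFacetOn (σ : Finset (Fin n)) : polarFace σ = polarFacetOn univ σ := by
  rw [polarFacetOn_eq_union, polarFace, univ_inter, compl_eq_univ_sdiff]

lemma polarOn_setOf_subset (V : Finset (Fin n)) :
    polarOn V {τ | τ ⊆ V} = {ν | ∃ ρ, ν ⊆ polarFacetOn V ρ} := by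
  ext ν
  constructor
  · rintro ⟨σ, hσ, hν⟩
    exact ⟨σ, by rwa [polarFacetOn_eq_union, inter_eq_right.mpr hσ]⟩
  · rintro ⟨ρ, hν⟩
    refine ⟨V ∩ ρ, inter_subset_left, ?_⟩
    rwa [sdiff_inter_self_left, ← polarFacetOn_eq_union]

lemma exists_eq_polarFacetOn_of_mem_polar {C : Set (Finset (Fin n))} {ν : Finset (Fin n ⊕ Fin n)}
    (hν : ν ∈ polar C) (hcard : #ν = n) : ∃ σ, ν = polarFacetOn univ σ := by
  obtain ⟨σ, -, hνσ⟩ := hν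
  refine ⟨σ, eq_of_subset_of_card_le (polarFace_eq_polarFacetOn σ ▸ hνσ) ?_⟩
  rw [card_polarFacetOn, card_univ, Fintype.card_fin, hcard]

lemma card_suppF_of_subset {V ρ : Finset (Fin n)} {F : Finset (Fin n ⊕ Fin n)}
    (hF : F ⊆ polarFacetOn V ρ) : #(suppF F) = #F := by
  obtain ⟨U, -, rfl⟩ := subset_polarFacetOn_iff.mp hF
  rw [suppF, image_elim_polarFacetOn, card_polarFacetOn]

lemma polarFacetOn_sdiff_of_subset {V ρ : Finset (Fin n)} {F : Finset (Fin n ⊕ Fin n)}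
    (hF : F ⊆ polarFacetOn V ρ) : polarFacetOn V ρ \ F = polarFacetOn (V \ suppF F) ρ := by
  obtain ⟨U, -, rfl⟩ := subset_polarFacetOn_iff.mp hF
  rw [polarFacetOn_sdiff, suppF, image_elim_polarFacetOn]

end PolarComplex

theorem shellable_no_sphere_link_obstruction_general {n : ℕ} (C : Set (Finset (Fin n)))
    (hsh : Shellable n (polar C)) (F : Finset (Fin n ⊕ Fin n)) :
    Collapsible (link (polar C) F) ∨
      link (polar C) F = polarOn (suppF F)ᶜ {τ | τ ⊆ (suppF F)ᶜ} := by
  obtain ⟨t, G, hG, hΔ⟩ := hsh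
  choose σ hσ using fun l =>
    exists_eq_polarFacetOn_of_mem_polar (show G l ∈ polar C from hΔ ▸ ⟨l, subset_rfl⟩) (hG.1 l)
  obtain ⟨t', e, he, hGF⟩ := hG.exists_shelling_link F
  rw [hΔ, link_eq_of_range he]
  by_cases hhom : ∃ i₀, restriction (fun i => G (e i) \ F) i₀ = G (e i₀) \ F
  · obtain ⟨i₀, h₀⟩ := hhom
    have hFσ : ∀ i, F ⊆ polarFacetOn univ (σ (e i)) := fun i => hσ (e i) ▸ he.subset ⟨i, rfl⟩
    have hlink : ∀ i, G (e i) \ F = polarFacetOn (suppF F)ᶜ (σ (e i)) := fun i => by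
      rw [hσ, polarFacetOn_sdiff_of_subset (hFσ i), compl_eq_univ_sdiff]
    have hcard : n - #F = #(suppF F)ᶜ := by
      rw [card_compl, Fintype.card_fin, card_suppF_of_subset (hFσ i₀)]
    rw [hcard] at hGF
    rw [polarOn_setOf_subset]
    refine Or.inr (Set.ext fun ν => ⟨fun ⟨i, hν⟩ => ⟨σ (e i), hlink i ▸ hν⟩, fun ⟨ρ, hν⟩ => ?_⟩)
    obtain ⟨j, hj⟩ := hGF.exists_eq_polarFacetOn (fun i => ⟨_, hlink i⟩) h₀ ρ
    exact ⟨j, hj ▸ hν⟩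
  · exact Or.inl (hGF.collapsible (not_exists.mp hhom))

/-- If `Γ(C)` is shellable then `C` has no sphere link obstructions: for every
non-maximal face `F` of `Γ(C)`, the link of `F` is either collapsible or equal to
the full polar complex `Γ(2^{[n] \ supp F})` on the remaining vertices. -/
theorem shellable_no_sphere_link_obstruction {n : ℕ} (C : Set (Finset (Fin n)))
    (hsh : Shellable n (polar C)) (F : Finset (Fin n ⊕ Fin n))
    (hF : F ∈ polar C) (hnonmax : ¬ IsFacet (polar C) F) :
    Collapsible (link (polar C) F) ∨
      link (polar C) F = polarOn (suppF F)ᶜ {τ | τ ⊆ (suppF F)ᶜ} :=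
  shellable_no_sphere_link_obstruction_general C hsh F
end

section
/- Let Δ be a shellable pure simplicial complex with shelling order F₁,...,F_t, and let σ ∈ Δ. Then link_σ Δ is shellable, with a shelling order induced by restricting the order F₁,...,F_t to facets containing σ (taking F_i \ σ for those F_i ⊇ σ). -/
section
variable {V : Type*} [DecidableEq V]

/-- Links of shellable complexes are shellable: if `F₁,…,F_t` is a shelling order of
`Δ` and `σ ∈ Δ`, then the facets `F_i \ σ` for `σ ⊆ F_i`, taken in the induced order
(via the unique order isomorphism with an initial segment of `ℕ`), form a shelling
order of `link_σ Δ`. -/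
theorem link_shellable {t k : ℕ} (F : Fin t → Finset V) (hsh : IsShelling k F)
    (σ : Finset V) (hσ : σ ∈ {ν : Finset V | ∃ i, ν ⊆ F i}) :
    ∃ e : Fin (Fintype.card {i : Fin t // σ ⊆ F i}) ≃o {i : Fin t // σ ⊆ F i},
      IsShelling (k - σ.card) (fun j => F (e j).1 \ σ) ∧
      link {ν : Finset V | ∃ i, ν ⊆ F i} σ = {ν | ∃ j, ν ⊆ F (e j).1 \ σ} := by
  obtain ⟨hcard, hinj, hshell⟩ := hsh
  refine ⟨(monoEquivOfFin {i : Fin t // σ ⊆ F i} rfl), ⟨?_, ?_, ?_⟩, ?_⟩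
  · intro j
    have h := (monoEquivOfFin {i : Fin t // σ ⊆ F i} rfl j).2
    rw [Finset.card_sdiff_of_subset h, hcard]
  · intro j j' h
    simp only at h
    have h1 : σ ⊆ F (monoEquivOfFin {i : Fin t // σ ⊆ F i} rfl j).1 :=
      (monoEquivOfFin {i : Fin t // σ ⊆ F i} rfl j).2
    have h2 : σ ⊆ F (monoEquivOfFin {i : Fin t // σ ⊆ F i} rfl j').1 :=
      (monoEquivOfFin {i : Fin t // σ ⊆ F i} rfl j').2
    have : F (monoEquivOfFin {i : Fin t // σ ⊆ F i} rfl j).1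
        = F (monoEquivOfFin {i : Fin t // σ ⊆ F i} rfl j').1 := by
      rw [← Finset.sdiff_union_of_subset h1, ← Finset.sdiff_union_of_subset h2, h]
    have := hinj this
    exact (monoEquivOfFin {i : Fin t // σ ⊆ F i} rfl).injective (Subtype.ext this)
  · intro j hj ν hν ⟨j', hj', hν'⟩
    set e := monoEquivOfFin {i : Fin t // σ ⊆ F i} rfl with he
    have hσi : σ ⊆ F (e j).1 := (e j).2
    have hσi' : σ ⊆ F (e j').1 := (e j').2
    have hlt : (e j').1 < (e j).1 := by
      have : e j' < e j := e.strictMono hj'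
      exact this
    have hi0 : 0 < ((e j).1 : ℕ) := lt_of_le_of_lt (Nat.zero_le _) hlt
    have hsub : ν ∪ σ ⊆ F (e j).1 :=
      Finset.union_subset ((Finset.subset_sdiff.mp hν).1) hσi
    obtain ⟨μ, hμ1, ⟨j₀, hj₀lt, hj₀sub⟩, hμ3, hμ4⟩ :=
      hshell (e j).1 hi0 (ν ∪ σ) hsub
        ⟨(e j').1, hlt, Finset.union_subset ((Finset.subset_sdiff.mp hν').1) hσi'⟩
    have hσμ : σ ⊆ μ := (Finset.union_subset_iff.mp hμ3).2
    have hσj₀ : σ ⊆ F j₀ := hσμ.trans hj₀sub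
    refine ⟨μ \ σ, Finset.sdiff_subset_sdiff hμ1 le_rfl,
      ⟨e.symm ⟨j₀, hσj₀⟩, ?_, ?_⟩, ?_, ?_⟩
    · have : e (e.symm ⟨j₀, hσj₀⟩) < e j := by
        rw [e.apply_symm_apply]
        exact Subtype.mk_lt_mk.mpr hj₀lt
      exact e.lt_iff_lt.mp this
    · simp only [OrderIso.apply_symm_apply]
      exact Finset.sdiff_subset_sdiff hj₀sub le_rfl
    · rw [Finset.subset_sdiff]
      exact ⟨(Finset.union_subset_iff.mp hμ3).1, (Finset.subset_sdiff.mp hν).2⟩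
    · rw [Finset.card_sdiff_of_subset hσμ, hμ4]
      omega
  · set e := monoEquivOfFin {i : Fin t // σ ⊆ F i} rfl with he
    ext ν
    constructor
    · rintro ⟨⟨i, hi⟩, hdisj, ⟨i', hi'⟩⟩
      have hσi' : σ ⊆ F i' := (Finset.union_subset_iff.mp hi').2
      refine ⟨e.symm ⟨i', hσi'⟩, ?_⟩
      simp only [OrderIso.apply_symm_apply]
      rw [Finset.subset_sdiff]
      exact ⟨(Finset.union_subset_iff.mp hi').1,
        Finset.disjoint_iff_inter_eq_empty.mpr hdisj⟩
    · rintro ⟨j, hj⟩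
      have hσi : σ ⊆ F (e j).1 := (e j).2
      obtain ⟨hsub, hdisj⟩ := Finset.subset_sdiff.mp hj
      exact ⟨⟨(e j).1, hsub⟩, Finset.disjoint_iff_inter_eq_empty.mp hdisj,
        ⟨(e j).1, Finset.union_subset hsub hσi⟩⟩

end
end
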